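/- Let G and H be hypergraphs and G □ H their Cartesian product. Then I(G □ H) ≤ I(G) · I₂(H), where I₂ denotes the 2-infection number. -/

import Mathlib

/-- A (finite) hypergraph: a vertex set and a set of edges, each edge a subset
of the vertex set. -/
structure FinHypergraph (α : Type*) [DecidableEq α] where
  verts : Finset α
  edges : Finset (Finset α)
  edge_sub : ∀ e ∈ edges, e ⊆ verts

namespace FinHypergraph

variable {α : Type*} [DecidableEq α]

/-- The `m`-infection closure of an initially infected set `W`: a set `A` of
infected vertices with `m ≤ |A|` can infect an edge `E ⊇ A` provided every
vertex `u` outside `E` such that `A ∪ {u}` is contained in some edge is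
already infected; then every vertex of `E` becomes infected. -/
inductive InfectedFromM (H : FinHypergraph α) (m : ℕ) (W : Finset α) : α → Prop
  | init {v : α} (hv : v ∈ W) : InfectedFromM H m W v
  | spread {A E : Finset α} {v : α}
      (hcard : m ≤ A.card) (hAE : A ⊆ E) (hE : E ∈ H.edges)
      (hAinf : ∀ a ∈ A, InfectedFromM H m W a)
      (hblock : ∀ u ∈ H.verts, u ∉ E → (∃ E' ∈ H.edges, A ∪ {u} ⊆ E') →
        InfectedFromM H m W u)
      (hv : v ∈ E) : InfectedFromM H m W v

/-- `W` is an `m`-infection set if starting from `W` every vertex gets infected. -/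
def IsInfectionSetM (H : FinHypergraph α) (m : ℕ) (W : Finset α) : Prop :=
  W ⊆ H.verts ∧ ∀ v ∈ H.verts, InfectedFromM H m W v

/-- The `m`-infection number: minimum size of an `m`-infection set. -/
noncomputable def infectionNumberM (H : FinHypergraph α) (m : ℕ) : ℕ :=
  sInf {n | ∃ W : Finset α, IsInfectionSetM H m W ∧ W.card = n}

/-- Ordinary infection (`m = 1`, i.e. the infecting set is nonempty). -/
def InfectedFrom (H : FinHypergraph α) : Finset α → α → Prop := InfectedFromM H 1

def IsInfectionSet (H : FinHypergraph α) : Finset α → Prop := IsInfectionSetM H 1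

noncomputable def infectionNumber (H : FinHypergraph α) : ℕ := infectionNumberM H 1

/-- The degree of a vertex: the number of edges containing it. -/
def degree (H : FinHypergraph α) (v : α) : ℕ := (H.edges.filter (fun e => v ∈ e)).card

/-- Two vertices are adjacent if some edge contains both. -/
def Adj (H : FinHypergraph α) (u v : α) : Prop := ∃ e ∈ H.edges, u ∈ e ∧ v ∈ e

/-- A hypergraph is connected if any two vertices are joined by a chain of
adjacencies. -/
def Connected (H : FinHypergraph α) : Prop :=
  ∀ u ∈ H.verts, ∀ v ∈ H.verts, Relation.ReflTransGen H.Adj u v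

/-- A hypergraph is reduced if no edge is contained in another edge. -/
def Reduced (H : FinHypergraph α) : Prop :=
  ∀ e ∈ H.edges, ∀ f ∈ H.edges, e ⊆ f → e = f

open Classical in
/-- The connected component of a vertex. -/
noncomputable def component (H : FinHypergraph α) (v : α) : Finset α :=
  H.verts.filter (fun u => Relation.ReflTransGen H.Adj v u)

/-- The sub-hypergraph induced by a vertex set `S`. -/
def restrict (H : FinHypergraph α) (S : Finset α) : FinHypergraph α where
  verts := H.verts ∩ S
  edges := H.edges.filter (fun e => e ⊆ S)
  edge_sub := fun e he => by
    simp only [Finset.mem_filter] at he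
    exact Finset.subset_inter (H.edge_sub e he.1) he.2

end FinHypergraph

/-- The Cartesian product of two hypergraphs: vertex set `V(G) × V(H)` and
edges `E × {v}` for `E ∈ E(G)`, `v ∈ V(H)`, together with `{u} × E` for
`u ∈ V(G)`, `E ∈ E(H)`. -/
def cartesianProd {α β : Type*} [DecidableEq α] [DecidableEq β]
    (G : FinHypergraph α) (H : FinHypergraph β) : FinHypergraph (α × β) where
  verts := G.verts ×ˢ H.verts
  edges := (G.edges ×ˢ H.verts).image (fun p => p.1 ×ˢ ({p.2} : Finset β)) ∪
    (G.verts ×ˢ H.edges).image (fun p => ({p.1} : Finset α) ×ˢ p.2)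
  edge_sub := by
    intro e he
    simp only [Finset.mem_union, Finset.mem_image, Finset.mem_product] at he
    rcases he with ⟨⟨E, v⟩, ⟨hE, hv⟩, rfl⟩ | ⟨⟨u, E⟩, ⟨hu, hE⟩, rfl⟩
    · exact Finset.product_subset_product (G.edge_sub _ hE)
        (Finset.singleton_subset_iff.mpr hv)
    · exact Finset.product_subset_product (Finset.singleton_subset_iff.mpr hu)
        (H.edge_sub _ hE)

/-!
If `WG` infects `G` and `WH` 2-infects `H`, then `WG × WH` infects `G □ H`. Along the
1-infection of `G`, a vertex `g` is reached once its whole fibre `{g} × V(H)` is infected: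
an edge `E` of `G` infected from `A` lifts to the edges `E × {w}` infected from `A × {w}`,
and every vertex blocking such a lift either lies over a vertex blocking `E` in `G` or lies
in a fibre over `A`. For `g ∈ WG` the fibre is infected from `{g} × WH` by copying the
2-infection of `H`: a set of at least two vertices of `{g} × V(H)` lies in no edge `E × {w}`,
so only edges inside the fibre can block.
-/

namespace FinHypergraph

variable {α : Type*} [DecidableEq α]

lemma isInfectionSetM_verts (H : FinHypergraph α) (m : ℕ) : H.IsInfectionSetM m H.verts :=
  ⟨subset_rfl, fun _ hv => .init hv⟩

lemma exists_isInfectionSetM_card_eq (H : FinHypergraph α) (m : ℕ) :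
    ∃ W, H.IsInfectionSetM m W ∧ W.card = H.infectionNumberM m :=
  Nat.sInf_mem (s := {n | ∃ W : Finset α, H.IsInfectionSetM m W ∧ W.card = n})
    ⟨_, H.verts, H.isInfectionSetM_verts m, rfl⟩

lemma infectionNumberM_le_card {H : FinHypergraph α} {m : ℕ} {W : Finset α}
    (hW : H.IsInfectionSetM m W) : H.infectionNumberM m ≤ W.card :=
  Nat.sInf_le ⟨W, hW, rfl⟩

end FinHypergraph

section CartesianProd

open FinHypergraph

variable {α β : Type*} [DecidableEq α] [DecidableEq β] {G : FinHypergraph α}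
  {H : FinHypergraph β}

lemma mem_cartesianProd_verts {p : α × β} :
    p ∈ (cartesianProd G H).verts ↔ p.1 ∈ G.verts ∧ p.2 ∈ H.verts :=
  Finset.mem_product

lemma mem_cartesianProd_edges {e : Finset (α × β)} :
    e ∈ (cartesianProd G H).edges ↔
      (∃ E ∈ G.edges, ∃ w ∈ H.verts, e = E ×ˢ {w}) ∨
        ∃ g ∈ G.verts, ∃ F ∈ H.edges, e = {g} ×ˢ F := by
  simp only [cartesianProd, Finset.mem_union, Finset.mem_image, Finset.mem_product,
    Prod.exists]
  constructor
  · rintro (⟨E, w, ⟨hE, hw⟩, rfl⟩ | ⟨g, F, ⟨hg, hF⟩, rfl⟩)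
    exacts [.inl ⟨E, hE, w, hw, rfl⟩, .inr ⟨g, hg, F, hF, rfl⟩]
  · rintro (⟨E, hE, w, hw, rfl⟩ | ⟨g, hg, F, hF, rfl⟩)
    exacts [.inl ⟨E, w, ⟨hE, hw⟩, rfl⟩, .inr ⟨g, F, ⟨hg, hF⟩, rfl⟩]

variable {m : ℕ} {W : Finset (α × β)}

theorem infectedFromM_cartesianProd_of_infectedFromM_left {WG : Finset α} (hm : 1 ≤ m)
    (hWG : ∀ g ∈ WG, ∀ v ∈ H.verts, (cartesianProd G H).InfectedFromM m W (g, v))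
    {g : α} (hg : G.InfectedFromM m WG g) {v : β} (hv : v ∈ H.verts) :
    (cartesianProd G H).InfectedFromM m W (g, v) := by
  induction hg generalizing v with
  | init hg => exact hWG _ hg _ hv
  | @spread A E g hcard hAE hE _ _ hgE ihA ihblock =>
    obtain ⟨a₀, ha₀⟩ := Finset.card_pos.mp (by omega : 0 < A.card)
    refine .spread (A := A ×ˢ {v}) (E := E ×ˢ {v}) (by simpa using hcard)
      (Finset.product_subset_product hAE subset_rfl)
      (mem_cartesianProd_edges.mpr (.inl ⟨E, hE, v, hv, rfl⟩)) ?_ ?_ (by simp [hgE])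
    · rintro ⟨a, w⟩ haw
      obtain ⟨ha, rfl⟩ : a ∈ A ∧ v = w := by simpa using haw
      exact ihA a ha hv
    · rintro ⟨x, y⟩ hxy hxyE ⟨E', hE', hsub⟩
      rw [mem_cartesianProd_verts] at hxy
      rw [Finset.union_subset_iff, Finset.singleton_subset_iff] at hsub
      rcases mem_cartesianProd_edges.mp hE' with
        ⟨E₁, hE₁, w, -, rfl⟩ | ⟨g₁, -, F, -, rfl⟩
      · simp only [Finset.subset_iff, Finset.mem_product, Finset.mem_singleton, Prod.forall]
          at hsub
        obtain ⟨hAE₁, hx, rfl⟩ := hsub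
        obtain rfl : v = y := (hAE₁ a₀ v ⟨ha₀, rfl⟩).2
        refine ihblock x hxy.1 (by simpa using hxyE) ⟨E₁, hE₁, ?_⟩ hxy.2
        rw [Finset.union_subset_iff, Finset.singleton_subset_iff]
        exact ⟨fun a ha => (hAE₁ a v ⟨ha, rfl⟩).1, hx⟩
      · simp only [Finset.subset_iff, Finset.mem_product, Finset.mem_singleton, Prod.forall]
          at hsub
        obtain ⟨hAg₁, rfl, -⟩ := hsub
        obtain rfl : a₀ = x := (hAg₁ a₀ v ⟨ha₀, rfl⟩).1
        exact ihA a₀ ha₀ hxy.2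

theorem infectedFromM_cartesianProd_of_infectedFromM_right {WH : Finset β} {n : ℕ}
    (hn : 2 ≤ n) (hmn : m ≤ n) {g : α} (hg : g ∈ G.verts)
    (hWH : ∀ w ∈ WH, (cartesianProd G H).InfectedFromM m W (g, w))
    {v : β} (hv : H.InfectedFromM n WH v) :
    (cartesianProd G H).InfectedFromM m W (g, v) := by
  induction hv with
  | init hv => exact hWH _ hv
  | @spread A F v hcard hAF hF _ _ hvF ihA ihblock =>
    refine .spread (A := {g} ×ˢ A) (E := {g} ×ˢ F) (by simpa using hmn.trans hcard)
      (Finset.product_subset_product subset_rfl hAF)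
      (mem_cartesianProd_edges.mpr (.inr ⟨g, hg, F, hF, rfl⟩)) ?_ ?_ (by simp [hvF])
    · rintro ⟨x, a⟩ hxa
      obtain ⟨ha, rfl⟩ : a ∈ A ∧ g = x := by simpa using hxa
      exact ihA a ha
    · rintro ⟨x, y⟩ hxy hxyF ⟨E', hE', hsub⟩
      rw [mem_cartesianProd_verts] at hxy
      rw [Finset.union_subset_iff, Finset.singleton_subset_iff] at hsub
      rcases mem_cartesianProd_edges.mp hE' with
        ⟨E, -, w, -, rfl⟩ | ⟨g₁, -, F₁, hF₁, rfl⟩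
      · simp only [Finset.subset_iff, Finset.mem_product, Finset.mem_singleton, Prod.forall]
          at hsub
        have hAw : ∀ a ∈ A, a = w := fun a ha => (hsub.1 g a ⟨rfl, ha⟩).2
        have : A.card ≤ 1 :=
          Finset.card_le_one.mpr fun a ha b hb => (hAw a ha).trans (hAw b hb).symm
        omega
      · simp only [Finset.subset_iff, Finset.mem_product, Finset.mem_singleton, Prod.forall]
          at hsub
        obtain ⟨hAF₁, rfl, hy⟩ := hsub
        obtain ⟨a₀, ha₀⟩ := Finset.card_pos.mp (by omega : 0 < A.card)
        obtain rfl : g = x := (hAF₁ g a₀ ⟨rfl, ha₀⟩).1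
        refine ihblock y hxy.2 (by simpa using hxyF) ⟨F₁, hF₁, ?_⟩
        rw [Finset.union_subset_iff, Finset.singleton_subset_iff]
        exact ⟨fun a ha => (hAF₁ g a ⟨rfl, ha⟩).2, hy⟩

theorem isInfectionSetM_cartesianProd {WG : Finset α} {WH : Finset β} {n : ℕ} (hm : 1 ≤ m)
    (hn : 2 ≤ n) (hmn : m ≤ n) (hWG : G.IsInfectionSetM m WG) (hWH : H.IsInfectionSetM n WH) :
    (cartesianProd G H).IsInfectionSetM m (WG ×ˢ WH) := by
  refine ⟨Finset.product_subset_product hWG.1 hWH.1, fun ⟨g, v⟩ hgv => ?_⟩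
  rw [mem_cartesianProd_verts] at hgv
  refine infectedFromM_cartesianProd_of_infectedFromM_left hm (fun g hg v hv => ?_)
    (hWG.2 g hgv.1) hgv.2
  exact infectedFromM_cartesianProd_of_infectedFromM_right hn hmn (hWG.1 hg)
    (fun w hw => .init (Finset.mem_product.mpr ⟨hg, hw⟩)) (hWH.2 v hv)

theorem infectionNumberM_cartesianProd_le {n : ℕ} (hm : 1 ≤ m) (hn : 2 ≤ n) (hmn : m ≤ n) :
    (cartesianProd G H).infectionNumberM m ≤ G.infectionNumberM m * H.infectionNumberM n := by
  obtain ⟨WG, hWG, hWG_card⟩ := G.exists_isInfectionSetM_card_eq m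
  obtain ⟨WH, hWH, hWH_card⟩ := H.exists_isInfectionSetM_card_eq n
  calc (cartesianProd G H).infectionNumberM m
      ≤ (WG ×ˢ WH).card :=
        infectionNumberM_le_card (isInfectionSetM_cartesianProd hm hn hmn hWG hWH)
    _ = G.infectionNumberM m * H.infectionNumberM n := by
      rw [Finset.card_product, hWG_card, hWH_card]

end CartesianProd

/-- `I(G □ H) ≤ I(G) · I₂(H)`, where `I₂` is the `2`-infection
number. -/
theorem infectionNumber_cartesianProd_le
    {α β : Type*} [DecidableEq α] [DecidableEq β]
    (G : FinHypergraph α) (H : FinHypergraph β) :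
    (cartesianProd G H).infectionNumber ≤
      G.infectionNumber * H.infectionNumberM 2 :=
  infectionNumberM_cartesianProd_le le_rfl le_rfl one_le_two
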